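/- arXiv:2503.03243 — 2 statements merged into one kernel-verified Lean document; each statement's English description precedes it below -/
import Mathlib

section
/- Let n, ℓ, p be natural numbers with p ≥ 1 and k := ℓ + p ≤ n. Let f, fI, h : ℕ → ℤ satisfy: h(0) = 1, h(n+1) = 0, and fI(θ) = f(θ) − h(θ+1) for all θ ≤ n; for every ξ with ℓ+1 ≤ ξ ≤ k, the cone Dehn–Sommerville relation Σ_{θ=0}^{n} (−1)^θ · C(n−θ, (n+1)−ξ) · (f(θ)+h(θ)) + (−1)^n · Σ_{θ=0}^{n} (−1)^θ · C(n−θ, ξ) · (f(θ)+h(θ)) = (1+(−1)^n) · C(n+1, ξ); and for every such ξ, the boundary Dehn–Sommerville relation Σ_{θ=0}^{n} (−1)^θ · C(n−θ, (n+1)−ξ) · h(θ) = (−1)^n · Σ_{θ=0}^{n} (−1)^θ · C(n−θ, ξ−1) · h(θ). Then Σ_{s=0}^{p−1} Σ_{θ=0}^{k} (−1)^θ · C(θ, s) · C(n−θ, (n−ℓ)−s) · f(θ) + (−1)^{n+p−1} · Σ_{s=0}^{p−1} Σ_{θ=0}^{n−ℓ} (−1)^θ · C(θ, s) · C(n−θ,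 k−s) · fI(θ) = C(n, ℓ) + (−1)^{p−1} · C(n, k). -/
open Finset

/-- Alternating Vandermonde-type identity. -/
lemma altV : ∀ (v k p : ℕ), p ≤ k → v ≤ k + 1 →
    (∑ j ∈ Finset.range (p + 1),
      (-1 : ℤ) ^ j * (Nat.choose v j : ℤ) * (Nat.choose (k - j) (p - j) : ℤ))
    = if v ≤ k then ((Nat.choose (k - v) p : ℤ)) else (-1) ^ p := by
  intro v
  induction v with
  | zero =>
    intro k p hpk hv
    rw [if_pos (Nat.zero_le k)]
    rw [Finset.sum_eq_single 0]
    · simp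
    · intro j _ hj
      rcases Nat.exists_eq_add_of_lt (Nat.pos_of_ne_zero hj) with ⟨i, rfl⟩
      simp [Nat.choose_eq_zero_of_lt]
    · simp
  | succ v ih =>
    intro k p hpk hv
    match p with
    | 0 =>
      rw [Finset.sum_range_one]
      simp only [Nat.choose_zero_right, Nat.sub_zero, pow_zero]
      split <;> simp
    | P + 1 =>
      have expand : ∀ u : ℕ,
          (∑ j ∈ Finset.range (P + 2),
            (-1 : ℤ) ^ j * (Nat.choose u j : ℤ) * (Nat.choose (k - j) (P + 1 - j) : ℤ))
          = (Nat.choose k (P + 1) : ℤ) +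
            ∑ i ∈ Finset.range (P + 1),
              (-1 : ℤ) ^ (i + 1) * (Nat.choose u (i + 1) : ℤ)
                * (Nat.choose (k - 1 - i) (P - i) : ℤ) := by
        intro u
        rw [Finset.sum_range_succ' (fun j => (-1 : ℤ) ^ j * (Nat.choose u j : ℤ)
              * (Nat.choose (k - j) (P + 1 - j) : ℤ)) (P + 1)]
        rw [add_comm]
        congr 1
        · simp
        · refine Finset.sum_congr rfl fun i _ => ?_
          rw [show k - (i + 1) = k - 1 - i from by omega,
            show P + 1 - (i + 1) = P - i from by omega]
      have key : (∑ j ∈ Finset.range (P + 2),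
            (-1 : ℤ) ^ j * (Nat.choose (v + 1) j : ℤ) * (Nat.choose (k - j) (P + 1 - j) : ℤ))
          = (∑ j ∈ Finset.range (P + 2),
              (-1 : ℤ) ^ j * (Nat.choose v j : ℤ) * (Nat.choose (k - j) (P + 1 - j) : ℤ))
            - ∑ j ∈ Finset.range (P + 1),
              (-1 : ℤ) ^ j * (Nat.choose v j : ℤ) * (Nat.choose (k - 1 - j) (P - j) : ℤ) := by
        rw [expand (v + 1), expand v]
        have : ∀ i ∈ Finset.range (P + 1),
            (-1 : ℤ) ^ (i + 1) * (Nat.choose (v + 1) (i + 1) : ℤ)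
              * (Nat.choose (k - 1 - i) (P - i) : ℤ)
            = (-1 : ℤ) ^ (i + 1) * (Nat.choose v (i + 1) : ℤ)
                * (Nat.choose (k - 1 - i) (P - i) : ℤ)
              - (-1 : ℤ) ^ i * (Nat.choose v i : ℤ) * (Nat.choose (k - 1 - i) (P - i) : ℤ) := by
          intro i _
          rw [Nat.choose_succ_succ]
          push_cast
          ring
        rw [Finset.sum_congr rfl this, Finset.sum_sub_distrib]
        ring
      rw [key, ih k (P + 1) hpk (by omega), ih (k - 1) P (by omega) (by omega)]
      rcases Nat.lt_or_ge v k with hvk | hvk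
      · -- v + 1 ≤ k
        rw [if_pos (by omega : v ≤ k), if_pos (by omega : v ≤ k - 1), if_pos (by omega : v + 1 ≤ k)]
        rw [show k - v = (k - (v + 1)) + 1 from by omega, Nat.choose_succ_succ,
          show k - 1 - v = k - (v + 1) from by omega]
        push_cast
        ring
      · -- v = k
        have hvk' : v = k := by omega
        subst hvk'
        rw [if_pos le_rfl, if_neg (by omega), if_neg (by omega)]
        simp [Nat.choose_eq_zero_of_lt, pow_succ]


lemma lemC (l m p u : ℕ) (hpm : p ≤ m) (hu : u ≤ l + m + 1) :
    (∑ i ∈ Finset.range (p + 1),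
      (-1 : ℤ) ^ i * (Nat.choose (l + p - i) l : ℤ) * (Nat.choose (m - p + i) i : ℤ)
        * (Nat.choose u (m - p + i) : ℤ))
    = (if u ≤ l + m then ((Nat.choose (l + m - u) p : ℤ)) else (-1) ^ p)
        * (Nat.choose u (m - p) : ℤ) := by
  obtain ⟨q, rfl⟩ : ∃ q, m = p + q := ⟨m - p, by omega⟩
  simp only [show p + q - p = q from by omega, show p + q - p = q from by omega]
  rcases Nat.lt_or_ge u q with huq | huq
  · rw [Finset.sum_eq_zero, (Nat.choose_eq_zero_of_lt huq ▸ rfl : (Nat.choose u q : ℤ) = 0),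
      mul_zero]
    intro i _
    rw [Nat.choose_eq_zero_of_lt (by omega : u < q + i)]
    simp
  · have hterm : ∀ i ∈ Finset.range (p + 1),
        (-1 : ℤ) ^ i * (Nat.choose (l + p - i) l : ℤ) * (Nat.choose (q + i) i : ℤ)
          * (Nat.choose u (q + i) : ℤ)
        = ((-1 : ℤ) ^ i * (Nat.choose (u - q) i : ℤ)
            * (Nat.choose (l + p - i) (p - i) : ℤ)) * (Nat.choose u q : ℤ) := by
      intro i hi
      have hi' : i ≤ p := by simpa using Nat.lt_succ_iff.mp (Finset.mem_range.mp hi)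
      have e1 : Nat.choose (l + p - i) l = Nat.choose (l + p - i) (p - i) :=
        Nat.choose_symm_of_eq_add (by omega)
      rcases Nat.lt_or_ge u (q + i) with h2 | h2
      · rw [Nat.choose_eq_zero_of_lt h2, Nat.choose_eq_zero_of_lt (by omega : u - q < i)]
        push_cast; ring
      · have e2 : Nat.choose u (q + i) * Nat.choose (q + i) q
            = Nat.choose u q * Nat.choose (u - q) i := by
          have := Nat.choose_mul (n := u) (k := q + i) (s := q) (by omega)
          rw [this, show q + i - q = i from by omega]
        have e3 : Nat.choose (q + i) i = Nat.choose (q + i) q := Nat.choose_symm_add.symm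
        rw [e1, e3]
        have e2' : (Nat.choose u (q + i) : ℤ) * (Nat.choose (q + i) q : ℤ)
            = (Nat.choose u q : ℤ) * (Nat.choose (u - q) i : ℤ) := by exact_mod_cast e2
        linear_combination ((-1 : ℤ) ^ i * (Nat.choose (l + p - i) (p - i) : ℤ)) * e2'
    rw [Finset.sum_congr rfl hterm, ← Finset.sum_mul]
    have := altV (u - q) (l + p) p (by omega) (by omega)
    rw [show ∀ j, (l + p) - j = l + p - j from fun _ => rfl] at this
    rw [this]
    congr 1
    rcases Nat.lt_or_ge (l + p + q) u with h | h
    · rw [if_neg (by omega), if_neg (by omega)]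
    · rw [if_pos (by omega), if_pos (by omega), show l + p - (u - q) = l + (p + q) - u from by omega]


lemma lemD (l m u : ℕ) (hu : u ≤ l + m + 1) :
    ∀ p, p ≤ m →
    (∑ s ∈ Finset.range p,
      (if u ≤ l + m then ((Nat.choose (l + m - u) s : ℤ)) else (-1) ^ s)
        * (Nat.choose u (m - s) : ℤ))
    = ∑ j ∈ Finset.range p,
        (-1 : ℤ) ^ (p - 1 - j) * (Nat.choose (l + j) l : ℤ)
          * (Nat.choose (m - 1 - j) (p - 1 - j) : ℤ) * (Nat.choose u (m - j) : ℤ) := by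
  intro p
  induction p with
  | zero => simp
  | succ p ih =>
    intro hp
    rw [Finset.sum_range_succ, ih (by omega)]
    -- claim: RHS(p+1) = RHS(p) + S
    have claim : (∑ j ∈ Finset.range (p + 1),
          (-1 : ℤ) ^ (p + 1 - 1 - j) * (Nat.choose (l + j) l : ℤ)
            * (Nat.choose (m - 1 - j) (p + 1 - 1 - j) : ℤ) * (Nat.choose u (m - j) : ℤ))
        = (∑ j ∈ Finset.range p,
            (-1 : ℤ) ^ (p - 1 - j) * (Nat.choose (l + j) l : ℤ)
              * (Nat.choose (m - 1 - j) (p - 1 - j) : ℤ) * (Nat.choose u (m - j) : ℤ))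
          + ∑ j ∈ Finset.range (p + 1),
            (-1 : ℤ) ^ (p - j) * (Nat.choose (l + j) l : ℤ)
              * (Nat.choose (m - j) (p - j) : ℤ) * (Nat.choose u (m - j) : ℤ) := by
      simp only [show p + 1 - 1 = p from rfl]
      rw [Finset.sum_range_succ, Finset.sum_range_succ (fun j => (-1 : ℤ) ^ (p - j)
        * (Nat.choose (l + j) l : ℤ) * (Nat.choose (m - j) (p - j) : ℤ)
        * (Nat.choose u (m - j) : ℤ))]
      simp only [Nat.sub_self, pow_zero, Nat.choose_zero_right, Nat.cast_one]
      rw [← add_assoc]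
      congr 1
      · rw [← Finset.sum_add_distrib]
        refine Finset.sum_congr rfl fun j hj => ?_
        have hj' : j < p := Finset.mem_range.mp hj
        have pasc : Nat.choose (m - j) (p - j)
            = Nat.choose (m - 1 - j) (p - 1 - j) + Nat.choose (m - 1 - j) (p - j) := by
          rw [show m - j = (m - 1 - j) + 1 from by omega, show p - j = (p - 1 - j) + 1 from by omega,
            Nat.choose_succ_succ]
        have sgn : (-1 : ℤ) ^ (p - j) = -(-1 : ℤ) ^ (p - 1 - j) := by
          rw [show p - j = (p - 1 - j) + 1 from by omega, pow_succ]; ring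
        rw [pasc, sgn]
        push_cast
        ring
    rw [claim]
    congr 1
    -- S = G p via lemC and reflection
    have hrefl := Finset.sum_range_reflect (fun i => (-1 : ℤ) ^ i * (Nat.choose (l + p - i) l : ℤ)
      * (Nat.choose (m - p + i) i : ℤ) * (Nat.choose u (m - p + i) : ℤ)) (p + 1)
    have hC := lemC l m p u (by omega) hu
    rw [← hrefl] at hC
    rw [← hC]
    refine Finset.sum_congr rfl fun j hj => ?_
    have hj' : j < p + 1 := Finset.mem_range.mp hj
    rw [show l + p - (p + 1 - 1 - j) = l + j from by omega,
      show m - p + (p + 1 - 1 - j) = m - j from by omega,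
      show p + 1 - 1 - j = p - j from by omega]


lemma transform (l m p : ℕ) (hpm : p ≤ m) (g : ℕ → ℤ) :
    (∑ s ∈ Finset.range p, ∑ θ ∈ Finset.range (l + m + 1),
      (-1 : ℤ) ^ θ * (Nat.choose θ s : ℤ) * (Nat.choose (l + m - θ) (m - s) : ℤ) * g θ)
    = ∑ j ∈ Finset.range p,
        (-1 : ℤ) ^ (p - 1 - j) * (Nat.choose (l + j) l : ℤ)
          * (Nat.choose (m - 1 - j) (p - 1 - j) : ℤ)
          * ∑ θ ∈ Finset.range (l + m + 1),
              (-1 : ℤ) ^ θ * (Nat.choose (l + m - θ) (m - j) : ℤ) * g θ := by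
  rw [Finset.sum_comm]
  have step1 : ∀ θ ∈ Finset.range (l + m + 1),
      (∑ s ∈ Finset.range p,
        (-1 : ℤ) ^ θ * (Nat.choose θ s : ℤ) * (Nat.choose (l + m - θ) (m - s) : ℤ) * g θ)
      = ∑ j ∈ Finset.range p,
          (-1 : ℤ) ^ (p - 1 - j) * (Nat.choose (l + j) l : ℤ)
            * (Nat.choose (m - 1 - j) (p - 1 - j) : ℤ)
            * ((-1 : ℤ) ^ θ * (Nat.choose (l + m - θ) (m - j) : ℤ) * g θ) := by
    intro θ hθ
    have hθ' : θ ≤ l + m := by have := Finset.mem_range.mp hθ; omega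
    have hd := lemD l m (l + m - θ) (by omega) p hpm
    simp only [if_pos (show l + m - θ ≤ l + m from by omega)] at hd
    rw [show l + m - (l + m - θ) = θ from by omega] at hd
    calc (∑ s ∈ Finset.range p,
          (-1 : ℤ) ^ θ * (Nat.choose θ s : ℤ) * (Nat.choose (l + m - θ) (m - s) : ℤ) * g θ)
        = (∑ s ∈ Finset.range p,
            (Nat.choose θ s : ℤ) * (Nat.choose (l + m - θ) (m - s) : ℤ))
          * ((-1 : ℤ) ^ θ * g θ) := by
          rw [Finset.sum_mul]
          exact Finset.sum_congr rfl fun s _ => by ring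
      _ = (∑ j ∈ Finset.range p,
            (-1 : ℤ) ^ (p - 1 - j) * (Nat.choose (l + j) l : ℤ)
              * (Nat.choose (m - 1 - j) (p - 1 - j) : ℤ) * (Nat.choose (l + m - θ) (m - j) : ℤ))
          * ((-1 : ℤ) ^ θ * g θ) := by rw [hd]
      _ = _ := by
          rw [Finset.sum_mul]
          exact Finset.sum_congr rfl fun j _ => by ring
  rw [Finset.sum_congr rfl step1, Finset.sum_comm]
  refine Finset.sum_congr rfl fun j _ => ?_
  rw [Finset.mul_sum]


/-- Skeletal degree-of-freedom count: for a triangulation of an `n`-ball with face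
numbers `f`, interior face numbers `fI`, and boundary face numbers `h` (with `h 0 = 1`,
`h (n+1) = 0`, `fI θ = f θ − h (θ+1)`), satisfying the cone and boundary
Dehn–Sommerville relations, the alternating skeletal count equals
`C(n,ℓ) + (−1)^{p−1}·C(n,ℓ+p)`. -/
theorem skeletal_dof_count (n l p : ℕ) (hp : 1 ≤ p) (hk : l + p ≤ n)
    (f fI h : ℕ → ℤ) (h0 : h 0 = 1) (hn1 : h (n + 1) = 0)
    (hfI : ∀ θ : ℕ, θ ≤ n → fI θ = f θ - h (θ + 1))
    (hDSC : ∀ ξ : ℕ, l + 1 ≤ ξ → ξ ≤ l + p →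
      (∑ θ ∈ Finset.range (n + 1),
          (-1 : ℤ) ^ θ * (Nat.choose (n - θ) ((n + 1) - ξ) : ℤ) * (f θ + h θ)) +
        (-1 : ℤ) ^ n *
          (∑ θ ∈ Finset.range (n + 1),
            (-1 : ℤ) ^ θ * (Nat.choose (n - θ) ξ : ℤ) * (f θ + h θ))
        = (1 + (-1 : ℤ) ^ n) * (Nat.choose (n + 1) ξ : ℤ))
    (hDSB : ∀ ξ : ℕ, l + 1 ≤ ξ → ξ ≤ l + p →
      ∑ θ ∈ Finset.range (n + 1),
          (-1 : ℤ) ^ θ * (Nat.choose (n - θ) ((n + 1) - ξ) : ℤ) * h θ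
        = (-1 : ℤ) ^ n *
          ∑ θ ∈ Finset.range (n + 1),
            (-1 : ℤ) ^ θ * (Nat.choose (n - θ) (ξ - 1) : ℤ) * h θ) :
    (∑ s ∈ Finset.range p, ∑ θ ∈ Finset.range (l + p + 1),
        (-1 : ℤ) ^ θ * (Nat.choose θ s : ℤ) *
          (Nat.choose (n - θ) ((n - l) - s) : ℤ) * f θ) +
      (-1 : ℤ) ^ (n + p - 1) *
        (∑ s ∈ Finset.range p, ∑ θ ∈ Finset.range ((n - l) + 1),
          (-1 : ℤ) ^ θ * (Nat.choose θ s : ℤ) *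
            (Nat.choose (n - θ) ((l + p) - s) : ℤ) * fI θ)
      = (Nat.choose n l : ℤ) + (-1 : ℤ) ^ (p - 1) * (Nat.choose n (l + p) : ℤ) := by
  obtain ⟨m, rfl, hpm⟩ : ∃ m, n = l + m ∧ p ≤ m := ⟨n - l, by omega, by omega⟩
  simp only [Nat.add_sub_cancel_left]
  -- extend the θ-ranges to l+m+1
  have e1 : (∑ s ∈ Finset.range p, ∑ θ ∈ Finset.range (l + p + 1),
        (-1 : ℤ) ^ θ * (Nat.choose θ s : ℤ) * (Nat.choose (l + m - θ) (m - s) : ℤ) * f θ)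
      = ∑ s ∈ Finset.range p, ∑ θ ∈ Finset.range (l + m + 1),
        (-1 : ℤ) ^ θ * (Nat.choose θ s : ℤ) * (Nat.choose (l + m - θ) (m - s) : ℤ) * f θ := by
    refine Finset.sum_congr rfl fun s hs => ?_
    refine Finset.sum_subset (Finset.range_subset_range.mpr (by omega)) fun θ hθ hθ' => ?_
    have h1 := Finset.mem_range.mp hθ
    have h2 : ¬ θ < l + p + 1 := fun hh => hθ' (Finset.mem_range.mpr hh)
    have h3 := Finset.mem_range.mp hs
    rw [Nat.choose_eq_zero_of_lt (by omega : l + m - θ < m - s)]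
    push_cast; ring
  have e2 : (∑ s ∈ Finset.range p, ∑ θ ∈ Finset.range (m + 1),
        (-1 : ℤ) ^ θ * (Nat.choose θ s : ℤ) * (Nat.choose (l + m - θ) (l + p - s) : ℤ) * fI θ)
      = ∑ s ∈ Finset.range p, ∑ θ ∈ Finset.range (l + m + 1),
        (-1 : ℤ) ^ θ * (Nat.choose θ s : ℤ) * (Nat.choose (l + m - θ) (l + p - s) : ℤ) * fI θ := by
    refine Finset.sum_congr rfl fun s hs => ?_
    refine Finset.sum_subset (Finset.range_subset_range.mpr (by omega)) fun θ hθ hθ' => ?_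
    have h1 := Finset.mem_range.mp hθ
    have h2 : ¬ θ < m + 1 := fun hh => hθ' (Finset.mem_range.mpr hh)
    have h3 := Finset.mem_range.mp hs
    rw [Nat.choose_eq_zero_of_lt (by omega : l + m - θ < l + p - s)]
    push_cast; ring
  rw [e1, e2]
  have t1 := transform l m p hpm f
  have t2 := transform (m - p) (l + p) p (by omega) fI
  simp only [show m - p + (l + p) = l + m from by omega] at t2
  rw [t1, t2]
  -- split lemma for f + h sums
  have hsplit : ∀ x : ℕ,
      (∑ θ ∈ Finset.range (l + m + 1),
        (-1 : ℤ) ^ θ * (Nat.choose (l + m - θ) x : ℤ) * (f θ + h θ))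
      = (∑ θ ∈ Finset.range (l + m + 1),
          (-1 : ℤ) ^ θ * (Nat.choose (l + m - θ) x : ℤ) * f θ)
        + ∑ θ ∈ Finset.range (l + m + 1),
            (-1 : ℤ) ^ θ * (Nat.choose (l + m - θ) x : ℤ) * h θ := by
    intro x
    rw [← Finset.sum_add_distrib]
    exact Finset.sum_congr rfl fun θ _ => by ring
  -- fI sums in terms of f and h sums
  have hFIs : ∀ x : ℕ,
      (∑ θ ∈ Finset.range (l + m + 1),
        (-1 : ℤ) ^ θ * (Nat.choose (l + m - θ) (x + 1) : ℤ) * fI θ)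
      = (∑ θ ∈ Finset.range (l + m + 1),
          (-1 : ℤ) ^ θ * (Nat.choose (l + m - θ) (x + 1) : ℤ) * f θ)
        + (∑ θ ∈ Finset.range (l + m + 1),
            (-1 : ℤ) ^ θ * (Nat.choose (l + m - θ) (x + 1) : ℤ) * h θ)
        + (∑ θ ∈ Finset.range (l + m + 1),
            (-1 : ℤ) ^ θ * (Nat.choose (l + m - θ) x : ℤ) * h θ)
        - (Nat.choose (l + m + 1) (x + 1) : ℤ) := by
    intro x
    have hW1 := Finset.sum_range_succ
      (fun θ => (-1 : ℤ) ^ θ * (Nat.choose (l + m + 1 - θ) (x + 1) : ℤ) * h θ) (l + m + 1)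
    have hW2 := Finset.sum_range_succ'
      (fun θ => (-1 : ℤ) ^ θ * (Nat.choose (l + m + 1 - θ) (x + 1) : ℤ) * h θ) (l + m + 1)
    rw [hW1] at hW2
    simp only [Nat.sub_self, hn1, mul_zero, add_zero, pow_zero, Nat.sub_zero, h0, mul_one,
      one_mul] at hW2
    -- hW2 : Hsum₁(x+1) = Σ_θ (-1)^(θ+1) C(l+m-θ,x+1) h(θ+1) + C(l+m+1,x+1)
    have ha : (∑ θ ∈ Finset.range (l + m + 1),
          (-1 : ℤ) ^ (θ + 1) * (Nat.choose (l + m + 1 - (θ + 1)) (x + 1) : ℤ) * h (θ + 1))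
        = - ∑ θ ∈ Finset.range (l + m + 1),
            (-1 : ℤ) ^ θ * (Nat.choose (l + m - θ) (x + 1) : ℤ) * h (θ + 1) := by
      rw [← Finset.sum_neg_distrib]
      refine Finset.sum_congr rfl fun θ hθ => ?_
      rw [show l + m + 1 - (θ + 1) = l + m - θ from by omega, pow_succ]
      ring
    rw [ha] at hW2
    have hb : (∑ θ ∈ Finset.range (l + m + 1),
          (-1 : ℤ) ^ θ * (Nat.choose (l + m + 1 - θ) (x + 1) : ℤ) * h θ)
        = (∑ θ ∈ Finset.range (l + m + 1),
            (-1 : ℤ) ^ θ * (Nat.choose (l + m - θ) (x + 1) : ℤ) * h θ)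
          + ∑ θ ∈ Finset.range (l + m + 1),
              (-1 : ℤ) ^ θ * (Nat.choose (l + m - θ) x : ℤ) * h θ := by
      rw [← Finset.sum_add_distrib]
      refine Finset.sum_congr rfl fun θ hθ => ?_
      have hθ' := Finset.mem_range.mp hθ
      rw [show l + m + 1 - θ = (l + m - θ) + 1 from by omega, Nat.choose_succ_succ]
      push_cast; ring
    rw [hb] at hW2
    have hc : (∑ θ ∈ Finset.range (l + m + 1),
          (-1 : ℤ) ^ θ * (Nat.choose (l + m - θ) (x + 1) : ℤ) * fI θ)
        = (∑ θ ∈ Finset.range (l + m + 1),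
            (-1 : ℤ) ^ θ * (Nat.choose (l + m - θ) (x + 1) : ℤ) * f θ)
          - ∑ θ ∈ Finset.range (l + m + 1),
              (-1 : ℤ) ^ θ * (Nat.choose (l + m - θ) (x + 1) : ℤ) * h (θ + 1) := by
      rw [← Finset.sum_sub_distrib]
      refine Finset.sum_congr rfl fun θ hθ => ?_
      have hθ' := Finset.mem_range.mp hθ
      rw [hfI θ (by omega)]
      ring
    rw [hc]
    linarith [hW2]
  -- key per-ξ identity
  have key : ∀ j, j < p →
      (∑ θ ∈ Finset.range (l + m + 1),
        (-1 : ℤ) ^ θ * (Nat.choose (l + m - θ) (m - j) : ℤ) * f θ)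
      + (-1 : ℤ) ^ (l + m) *
        (∑ θ ∈ Finset.range (l + m + 1),
          (-1 : ℤ) ^ θ * (Nat.choose (l + m - θ) (l + 1 + j) : ℤ) * fI θ)
      = (Nat.choose (l + m + 1) (l + 1 + j) : ℤ) := by
    intro j hj
    have h1 := hDSC (l + 1 + j) (by omega) (by omega)
    simp only [show l + m + 1 - (l + 1 + j) = m - j from by omega] at h1
    rw [hsplit (m - j), hsplit (l + 1 + j)] at h1
    have h2 := hDSB (l + 1 + j) (by omega) (by omega)
    simp only [show l + m + 1 - (l + 1 + j) = m - j from by omega,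
      show l + 1 + j - 1 = l + j from by omega] at h2
    have h3 := hFIs (l + j)
    rw [show l + j + 1 = l + 1 + j from by omega] at h3
    linear_combination h1 - h2 + (-1 : ℤ) ^ (l + m) * h3
  -- reflect and merge the second sum
  have hasm : (-1 : ℤ) ^ (l + m + p - 1) *
      (∑ x ∈ Finset.range p,
        (-1 : ℤ) ^ (p - 1 - x) * (Nat.choose (m - p + x) (m - p) : ℤ)
          * (Nat.choose (l + p - 1 - x) (p - 1 - x) : ℤ)
          * ∑ θ ∈ Finset.range (l + m + 1),
              (-1 : ℤ) ^ θ * (Nat.choose (l + m - θ) (l + p - x) : ℤ) * fI θ)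
      = ∑ j ∈ Finset.range p,
          (-1 : ℤ) ^ (p - 1 - j) * (Nat.choose (l + j) l : ℤ)
            * (Nat.choose (m - 1 - j) (p - 1 - j) : ℤ)
            * ((-1 : ℤ) ^ (l + m) *
                ∑ θ ∈ Finset.range (l + m + 1),
                  (-1 : ℤ) ^ θ * (Nat.choose (l + m - θ) (l + 1 + j) : ℤ) * fI θ) := by
    rw [Finset.mul_sum]
    have hr := Finset.sum_range_reflect (fun x => (-1 : ℤ) ^ (l + m + p - 1) *
      ((-1 : ℤ) ^ (p - 1 - x) * (Nat.choose (m - p + x) (m - p) : ℤ)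
        * (Nat.choose (l + p - 1 - x) (p - 1 - x) : ℤ)
        * ∑ θ ∈ Finset.range (l + m + 1),
            (-1 : ℤ) ^ θ * (Nat.choose (l + m - θ) (l + p - x) : ℤ) * fI θ)) p
    rw [← hr]
    refine Finset.sum_congr rfl fun j hj => ?_
    have hj' : j < p := Finset.mem_range.mp hj
    simp only [show p - 1 - (p - 1 - j) = j from by omega,
      show m - p + (p - 1 - j) = m - 1 - j from by omega,
      show l + p - 1 - (p - 1 - j) = l + j from by omega,
      show l + p - (p - 1 - j) = l + 1 + j from by omega]
    rw [show Nat.choose (m - 1 - j) (m - p) = Nat.choose (m - 1 - j) (p - 1 - j) from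
        Nat.choose_symm_of_eq_add (by omega),
      show Nat.choose (l + j) j = Nat.choose (l + j) l from Nat.choose_symm_add.symm]
    have hsgn : (-1 : ℤ) ^ (l + m + p - 1) * (-1 : ℤ) ^ j
        = (-1 : ℤ) ^ (l + m) * (-1 : ℤ) ^ (p - 1 - j) := by
      rw [← pow_add, ← pow_add, show l + m + p - 1 + j = (l + m + (p - 1 - j)) + 2 * j from
        by omega, pow_add, pow_mul]
      norm_num
    linear_combination ((Nat.choose (l + j) l : ℤ) * (Nat.choose (m - 1 - j) (p - 1 - j) : ℤ)
      * ∑ θ ∈ Finset.range (l + m + 1),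
          (-1 : ℤ) ^ θ * (Nat.choose (l + m - θ) (l + 1 + j) : ℤ) * fI θ) * hsgn
  rw [hasm, ← Finset.sum_add_distrib]
  have merged : (∑ j ∈ Finset.range p,
        ((-1 : ℤ) ^ (p - 1 - j) * (Nat.choose (l + j) l : ℤ)
            * (Nat.choose (m - 1 - j) (p - 1 - j) : ℤ)
            * (∑ θ ∈ Finset.range (l + m + 1),
                (-1 : ℤ) ^ θ * (Nat.choose (l + m - θ) (m - j) : ℤ) * f θ)
          + (-1 : ℤ) ^ (p - 1 - j) * (Nat.choose (l + j) l : ℤ)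
              * (Nat.choose (m - 1 - j) (p - 1 - j) : ℤ)
              * ((-1 : ℤ) ^ (l + m) *
                  ∑ θ ∈ Finset.range (l + m + 1),
                    (-1 : ℤ) ^ θ * (Nat.choose (l + m - θ) (l + 1 + j) : ℤ) * fI θ)))
      = ∑ j ∈ Finset.range p,
          (-1 : ℤ) ^ (p - 1 - j) * (Nat.choose (l + j) l : ℤ)
            * (Nat.choose (m - 1 - j) (p - 1 - j) : ℤ)
            * (Nat.choose (l + m + 1) (l + 1 + j) : ℤ) := by
    refine Finset.sum_congr rfl fun j hj => ?_
    have hj' : j < p := Finset.mem_range.mp hj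
    linear_combination ((-1 : ℤ) ^ (p - 1 - j) * (Nat.choose (l + j) l : ℤ)
      * (Nat.choose (m - 1 - j) (p - 1 - j) : ℤ)) * key j hj'
  rw [merged]
  -- final pure binomial identity
  have hd := lemD l m (l + m + 1) (le_refl _) p hpm
  simp only [if_neg (show ¬ l + m + 1 ≤ l + m from by omega)] at hd
  have conv1 : ∀ j ∈ Finset.range p,
      (-1 : ℤ) ^ (p - 1 - j) * (Nat.choose (l + j) l : ℤ)
          * (Nat.choose (m - 1 - j) (p - 1 - j) : ℤ) * (Nat.choose (l + m + 1) (l + 1 + j) : ℤ)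
      = (-1 : ℤ) ^ (p - 1 - j) * (Nat.choose (l + j) l : ℤ)
          * (Nat.choose (m - 1 - j) (p - 1 - j) : ℤ)
          * (Nat.choose (l + m + 1) (m - j) : ℤ) := by
    intro j hj
    have hj' : j < p := Finset.mem_range.mp hj
    rw [show Nat.choose (l + m + 1) (l + 1 + j) = Nat.choose (l + m + 1) (m - j) from
      Nat.choose_symm_of_eq_add (by omega)]
  rw [Finset.sum_congr rfl conv1, ← hd]
  have tele : ∀ s ∈ Finset.range p,
      (-1 : ℤ) ^ s * (Nat.choose (l + m + 1) (m - s) : ℤ)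
      = (fun i => (-1 : ℤ) ^ i * (Nat.choose (l + m) (m - i) : ℤ)) s
        - (fun i => (-1 : ℤ) ^ i * (Nat.choose (l + m) (m - i) : ℤ)) (s + 1) := by
    intro s hs
    have hs' : s < p := Finset.mem_range.mp hs
    simp only
    rw [show m - s = (m - (s + 1)) + 1 from by omega, Nat.choose_succ_succ, pow_succ]
    push_cast
    ring
  rw [Finset.sum_congr rfl tele,
    Finset.sum_range_sub' (fun i => (-1 : ℤ) ^ i * (Nat.choose (l + m) (m - i) : ℤ)) p]
  simp only [pow_zero, one_mul, Nat.sub_zero]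
  rw [show Nat.choose (l + m) m = Nat.choose (l + m) l from Nat.choose_symm_add.symm,
    show Nat.choose (l + m) (m - p) = Nat.choose (l + m) (l + p) from
      Nat.choose_symm_of_eq_add (by omega)]
  have hsgn2 : (-1 : ℤ) ^ (p - 1) = -(-1 : ℤ) ^ p := by
    obtain ⟨P, rfl⟩ : ∃ P, p = P + 1 := ⟨p - 1, by omega⟩
    simp [pow_succ]
  rw [hsgn2]
  ring
end

section
/- For all natural numbers n ≥ 2 and r ≥ 1, the following binomial identity holds: n²·C(r+1, n) + (r+1)·C(r−1, n−2) + C(r−1, n−1) = C(n+1, 2)·C(r+1, n) + C(n+1, 2)·C(r, n−1) + C(n, 2)·C(r, n). (Equivalently, the difference dim B_r Λ^{1,1}(K) − dim B_r Λ^{0,2}(K) of bubble-space dimensions on an n-simplex K for degree-r polynomial form-valued forms equals C(n+1,2)·C(r+1,n), the number of degrees of freedom of the degree-r Regge finite element.) -/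
/-!
After Pascal's rule `C(r+1,n) = C(r,n-1) + C(r,n)`, the two sides differ by a combination of
`C(n+1,2) + C(n,2) - n²`, `2·C(n+1,2) - (n+1)·n`, Pascal's rule for `C(r,n-1)` and the absorption
identity `r·C(r-1,n-2) = (n-1)·C(r,n-1)`, all of which vanish.
-/

theorem Nat.two_mul_add_one_choose_two (n : ℕ) : 2 * (n + 1).choose 2 = (n + 1) * n := by
  simpa [mul_comm] using (Nat.add_one_mul_choose_eq n 1).symm

theorem Nat.add_one_choose_two_add_choose_two (n : ℕ) : (n + 1).choose 2 + n.choose 2 = n ^ 2 := by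
  cases n with
  | zero => rfl
  | succ k =>
    have := Nat.two_mul_add_one_choose_two k
    rw [Nat.choose_succ_succ', Nat.choose_one_right]
    linarith

/-- For `n ≥ 2` and `r ≥ 1`:
`n²·C(r+1,n) + (r+1)·C(r−1,n−2) + C(r−1,n−1)
  = C(n+1,2)·C(r+1,n) + C(n+1,2)·C(r,n−1) + C(n,2)·C(r,n)`,
i.e. the difference of bubble-space dimensions `dim B_r Λ^{1,1}(K) − dim B_r Λ^{0,2}(K)`
on an `n`-simplex equals `C(n+1,2)·C(r+1,n)`, the number of degrees of freedom of the
degree-`r` Regge finite element. -/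
theorem regge_dof_count (n r : ℕ) (hn : 2 ≤ n) (hr : 1 ≤ r) :
    n ^ 2 * Nat.choose (r + 1) n + (r + 1) * Nat.choose (r - 1) (n - 2) +
        Nat.choose (r - 1) (n - 1)
      = Nat.choose (n + 1) 2 * Nat.choose (r + 1) n +
          Nat.choose (n + 1) 2 * Nat.choose r (n - 1) +
          Nat.choose n 2 * Nat.choose r n := by
  obtain ⟨m, rfl⟩ : ∃ m, n = m + 2 := ⟨n - 2, by omega⟩
  obtain ⟨s, rfl⟩ : ∃ s, r = s + 1 := ⟨r - 1, by omega⟩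
  simp only [Nat.add_sub_cancel, Nat.reduceSubDiff]
  rw [Nat.choose_succ_succ' (s + 1) (m + 1)]
  have pascal := Nat.choose_succ_succ' s m
  have absorption := Nat.add_one_mul_choose_eq s m
  have two_mul_choose := Nat.two_mul_add_one_choose_two (m + 2)
  have choose_add_choose := Nat.add_one_choose_two_add_choose_two (m + 2)
  zify at pascal absorption two_mul_choose choose_add_choose ⊢
  linear_combination absorption - pascal - ((s + 1).choose (m + 1) : ℤ) * two_mul_choose
    - ((s + 1).choose (m + 2) : ℤ) * choose_add_choose
end
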